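/- arXiv:1801.02957 — 5 statements merged into one kernel-verified Lean document; each statement's English description precedes it below -/
import Mathlib

section
/- Let A, B ∈ ℤ with 0 < A ≤ B, B ≥ 2 and 2A − B ≥ 5 (so A ≥ 5), let M = [[0, −B], [1, −A]] acting on ℝ², and let T be the tile for M and digits {0, …, B−1}·e₁. Then the point z = Σ_{k≥0} ( M^{−(2k+1)}·((A−3)·e₁) + M^{−(2k+2)}·((B−A+2)·e₁) ) belongs to T and is a cut point of T, i.e., T ∖ {z} is not preconnected. -/
/-
Let `l₁ < 2 - A` and `l₂` be the two roots of `X² + AX + B`. The linear forms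
`x ↦ x₀ + lᵢx₁` satisfy `φᵢ(Mx) = lᵢφᵢ(x)` and together determine `x`. Along an orbit
`M xₙ = xₙ₊₁ + dₙe₁` in the compact tile this gives `φᵢ(x₀) = Σ dₖ lᵢ^{-(k+1)}`.

The point `z` is the fixed point of the contraction `x ↦ M⁻¹(M⁻¹(x + (B-A+2)e₁) + (A-3)e₁)`,
which maps `T` into itself, so `z ∈ T` and the digits of `z` alternate `A-3, B-A+2`. Every digit
`0 ≤ d ≤ B-1` differs from these by at most `A-3`, and `(A-3)/(|l₁| - 1) < 1`, so a point of `T`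
on the line `φ₁ = φ₁(z)` has the digits of `z`, hence the same `φ₂` too, and equals `z`.
Changing the first digit of `z` by `±1` gives points of `T` on both sides of that line.
-/

noncomputable section

def M' (A B : ℤ) : Matrix (Fin 2) (Fin 2) ℝ := !![0, -(B : ℝ); 1, -(A : ℝ)]

def e1 : Fin 2 → ℝ := ![1, 0]

def cutPt (A B : ℤ) : Fin 2 → ℝ :=
  ∑' k : ℕ, (((M' A B)⁻¹ ^ (2 * k + 1)).mulVec (((A : ℝ) - 3) • e1)
    + ((M' A B)⁻¹ ^ (2 * k + 2)).mulVec (((B : ℝ) - (A : ℝ) + 2) • e1))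

namespace QuadraticTile

open Filter Topology Matrix

variable {A B : ℤ} {l₁ l₂ : ℝ} {T : Set (Fin 2 → ℝ)}

lemma not_isPreconnected_diff_singleton {X : Type*} [TopologicalSpace X] {T : Set X} {z a b : X}
    {f : X → ℝ} (hf : Continuous f) (hz : ∀ x ∈ T, f x = f z → x = z) (ha : a ∈ T) (hb : b ∈ T)
    (haz : f a < f z) (hzb : f z < f b) : ¬IsPreconnected (T \ {z}) := fun hT => by
  obtain ⟨x, hx, hxz⟩ := hT.intermediate_value ⟨ha, fun h => haz.ne (congrArg f h)⟩
    ⟨hb, fun h => hzb.ne' (congrArg f h)⟩ hf.continuousOn ⟨haz.le, hzb.le⟩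
  exact hx.2 (hz x hx.1 hxz)

lemma hasSum_of_eq_mul_add {r C : ℝ} (hr : |r| < 1) {y δ : ℕ → ℝ} (hy : ∀ n, |y n| ≤ C)
    (h : ∀ n, y n = r * (y (n + 1) + δ n)) : HasSum (fun k => δ k * r ^ (k + 1)) (y 0) := by
  set a : ℕ → ℝ := fun n => r ^ n * y n
  have ha : Summable a := by
    refine Summable.of_norm_bounded ((summable_geometric_of_lt_one (abs_nonneg r) hr).mul_left C)
      fun n => ?_
    rw [Real.norm_eq_abs, abs_mul, abs_pow, mul_comm]
    exact mul_le_mul_of_nonneg_right (hy n) (pow_nonneg (abs_nonneg r) n)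
  have htel : ∀ n, δ n * r ^ (n + 1) = a n - a (n + 1) := fun n => by
    simp only [a]; rw [h n]; ring
  have hshift := (hasSum_nat_add_iff' 1).2 ha.hasSum
  simpa [htel, a] using ha.hasSum.sub hshift

lemma head_eq_zero_of_hasSum_zero {r C : ℝ} (hr : r ≠ 0) (hC : (C + 1) * |r| < 1) {e : ℕ → ℤ}
    (he : ∀ k, |(e k : ℝ)| ≤ C) (hs : HasSum (fun k => (e k : ℝ) * r ^ (k + 1)) 0) :
    e 0 = 0 ∧ HasSum (fun k => (e (k + 1) : ℝ) * r ^ (k + 1)) 0 := by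
  have hC0 : 0 ≤ C := (abs_nonneg _).trans (he 0)
  have hr1 : |r| < 1 := by nlinarith [abs_nonneg r]
  have hgeom := (hasSum_geometric_of_lt_one (abs_nonneg r) hr1).mul_left (C * |r|)
  have hbound : ∀ k, ‖(e (k + 1) : ℝ) * r ^ (k + 1)‖ ≤ C * |r| * |r| ^ k := fun k => by
    rw [Real.norm_eq_abs, abs_mul, abs_pow, pow_succ]
    have := mul_le_mul_of_nonneg_right (he (k + 1))
      (mul_nonneg (pow_nonneg (abs_nonneg r) k) (abs_nonneg r))
    linarith
  obtain ⟨s, hg⟩ := Summable.of_norm_bounded hgeom.summable hbound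
  have hs_lt : |s| < 1 := by
    have := hg.norm_le_of_bounded hgeom hbound
    rw [Real.norm_eq_abs] at this
    refine this.trans_lt ?_
    rw [← div_eq_mul_inv, div_lt_one (by linarith)]
    linarith
  have htail : r * s = -((e 0 : ℝ) * r) := by
    have h1 := (hasSum_nat_add_iff' 1).2 hs
    have h2 := hg.mul_left r
    simp only [Finset.range_one, Finset.sum_singleton, zero_add, pow_one, zero_sub] at h1
    refine h2.unique (h1.congr_fun fun k => ?_)
    ring
  have he0 : (e 0 : ℝ) = -s := by
    apply mul_right_cancel₀ hr; linarith
  have he0' : e 0 = 0 := by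
    have : |(e 0 : ℝ)| < 1 := by rwa [he0, abs_neg]
    exact_mod_cast Int.abs_lt_one_iff.1 (by exact_mod_cast this)
  refine ⟨he0', ?_⟩
  rw [he0', Int.cast_zero, zero_eq_neg] at he0
  rwa [← he0]

lemma eq_zero_of_hasSum_zero {r C : ℝ} (hr : r ≠ 0) (hC : (C + 1) * |r| < 1) {e : ℕ → ℤ}
    (he : ∀ k, |(e k : ℝ)| ≤ C) (hs : HasSum (fun k => (e k : ℝ) * r ^ (k + 1)) 0) : e = 0 := by
  funext n
  induction n generalizing e with
  | zero => exact (head_eq_zero_of_hasSum_zero hr hC he hs).1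
  | succ n ih =>
    exact ih (fun k => he (k + 1)) (head_eq_zero_of_hasSum_zero hr hC he hs).2

def IsTile (A B : ℤ) (T : Set (Fin 2 → ℝ)) : Prop :=
  (M' A B).mulVec '' T = ⋃ j ∈ Set.Icc (0 : ℤ) (B - 1), (fun x => x + (j : ℝ) • e1) '' T

def digitMap (A B j : ℤ) (x : Fin 2 → ℝ) : Fin 2 → ℝ := (M' A B)⁻¹ *ᵥ (x + (j : ℝ) • e1)

lemma det_M' (A B : ℤ) : (M' A B).det = B := by
  simp [M', det_fin_two_of]

lemma M'_mulVec_inv_mulVec (hB : B ≠ 0) (x : Fin 2 → ℝ) : M' A B *ᵥ ((M' A B)⁻¹ *ᵥ x) = x := by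
  rw [mulVec_mulVec, mul_nonsing_inv _ (by simpa [det_M'] using hB), one_mulVec]

lemma M'_mulVec_digitMap (hB : B ≠ 0) (j : ℤ) (x : Fin 2 → ℝ) :
    M' A B *ᵥ digitMap A B j x = x + (j : ℝ) • e1 :=
  M'_mulVec_inv_mulVec hB _

lemma digitMap_sub_digitMap (j : ℤ) (x y : Fin 2 → ℝ) :
    digitMap A B j x - digitMap A B j y = (M' A B)⁻¹ *ᵥ (x - y) := by
  rw [digitMap, digitMap, ← mulVec_sub, add_sub_add_right_eq_sub]

namespace IsTile

lemma digitMap_mem (hT : IsTile A B T) (hB : B ≠ 0) {x : Fin 2 → ℝ} (hx : x ∈ T) {j : ℤ}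
    (hj : j ∈ Set.Icc 0 (B - 1)) : digitMap A B j x ∈ T := by
  have h : x + (j : ℝ) • e1 ∈ (M' A B).mulVec '' T := by
    rw [hT]
    exact Set.mem_biUnion hj ⟨x, hx, rfl⟩
  obtain ⟨y, hy, hxy⟩ := h
  rwa [digitMap, ← hxy, mulVec_mulVec, nonsing_inv_mul _ (by simpa [det_M'] using hB),
    one_mulVec]

lemma exists_orbit (hT : IsTile A B T) {x : Fin 2 → ℝ} (hx : x ∈ T) :
    ∃ (o : ℕ → Fin 2 → ℝ) (d : ℕ → ℤ), o 0 = x ∧ ∀ n, o n ∈ T ∧ d n ∈ Set.Icc 0 (B - 1) ∧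
      M' A B *ᵥ o n = o (n + 1) + (d n : ℝ) • e1 := by
  have step : ∀ y : T, ∃ p : ℤ × T, p.1 ∈ Set.Icc 0 (B - 1) ∧
      M' A B *ᵥ y = p.2 + (p.1 : ℝ) • e1 := by
    rintro ⟨y, hy⟩
    have h : M' A B *ᵥ y ∈ (M' A B).mulVec '' T := ⟨y, hy, rfl⟩
    rw [hT] at h
    obtain ⟨j, hj, y', hy', h⟩ := Set.mem_iUnion₂.1 h
    exact ⟨(j, ⟨y', hy'⟩), hj, h.symm⟩
  choose next hdigit hnext using step
  let o : ℕ → T := fun n => (fun y => (next y).2)^[n] ⟨x, hx⟩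
  refine ⟨fun n => o n, fun n => (next (o n)).1, rfl, fun n => ⟨(o n).2, hdigit _, ?_⟩⟩
  simp only [hnext, o, Function.iterate_succ_apply']

end IsTile

def eigenForm (l : ℝ) : (Fin 2 → ℝ) →L[ℝ] ℝ :=
  ContinuousLinearMap.proj 0 + l • ContinuousLinearMap.proj 1

@[simp]
lemma eigenForm_apply (l : ℝ) (x : Fin 2 → ℝ) : eigenForm l x = x 0 + l * x 1 := rfl

@[simp]
lemma eigenForm_e1 (l : ℝ) : eigenForm l e1 = 1 := by simp [e1]

lemma eigenForm_mulVec {l : ℝ} (hl : l ^ 2 + A * l + B = 0) (x : Fin 2 → ℝ) :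
    eigenForm l (M' A B *ᵥ x) = l * eigenForm l x := by
  simp only [eigenForm_apply, M', mulVec, dotProduct, Fin.sum_univ_two, of_apply, cons_val',
    cons_val_zero, cons_val_one, empty_val', cons_val_fin_one]
  linear_combination (-x 1) * hl

lemma eigenForm_inv_mulVec {l : ℝ} (hl : l ^ 2 + A * l + B = 0) (hB : B ≠ 0) (x : Fin 2 → ℝ) :
    eigenForm l ((M' A B)⁻¹ *ᵥ x) = l⁻¹ * eigenForm l x := by
  have hl0 : l ≠ 0 := by rintro rfl; simp_all
  conv_rhs => rw [← M'_mulVec_inv_mulVec hB x, eigenForm_mulVec hl, inv_mul_cancel_left₀ hl0]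

lemma eigenForm_inv_pow_mulVec {l : ℝ} (hl : l ^ 2 + A * l + B = 0) (hB : B ≠ 0) (n : ℕ)
    (x : Fin 2 → ℝ) : eigenForm l (((M' A B)⁻¹ ^ n) *ᵥ x) = l⁻¹ ^ n * eigenForm l x := by
  induction n with
  | zero => simp
  | succ n ih =>
    rw [pow_succ', ← mulVec_mulVec, eigenForm_inv_mulVec hl hB, ih, pow_succ', mul_assoc]

lemma eigenForm_digitMap {l : ℝ} (hl : l ^ 2 + A * l + B = 0) (hB : B ≠ 0) (j : ℤ)
    (x : Fin 2 → ℝ) : eigenForm l (digitMap A B j x) = l⁻¹ * (eigenForm l x + j) := by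
  rw [digitMap, eigenForm_inv_mulVec hl hB, map_add, map_smul, eigenForm_e1, smul_eq_mul, mul_one]

lemma eq_eigenForm_smul_add (h : l₁ ≠ l₂) (x : Fin 2 → ℝ) :
    x = (l₁ - l₂)⁻¹ • (eigenForm l₁ x • ![-l₂, 1] + eigenForm l₂ x • ![l₁, -1]) := by
  have h' : l₁ - l₂ ≠ 0 := sub_ne_zero.2 h
  ext i
  fin_cases i <;> simp <;> field_simp <;> ring

lemma eq_of_eigenForm_eq (h : l₁ ≠ l₂) {x y : Fin 2 → ℝ}
    (h₁ : eigenForm l₁ x = eigenForm l₁ y) (h₂ : eigenForm l₂ x = eigenForm l₂ y) : x = y := by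
  rw [eq_eigenForm_smul_add h x, eq_eigenForm_smul_add h y, h₁, h₂]

lemma summable_of_summable_eigenForm (h : l₁ ≠ l₂) {v : ℕ → Fin 2 → ℝ}
    (h₁ : Summable fun n => eigenForm l₁ (v n)) (h₂ : Summable fun n => eigenForm l₂ (v n)) :
    Summable v := by
  rw [funext fun n => eq_eigenForm_smul_add h (v n)]
  exact ((h₁.smul_const _).add (h₂.smul_const _)).const_smul _

structure ExpandingRoots (A B : ℤ) (l₁ l₂ : ℝ) : Prop where
  root₁ : l₁ ^ 2 + A * l₁ + B = 0
  root₂ : l₂ ^ 2 + A * l₂ + B = 0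
  ne : l₁ ≠ l₂
  one_lt_abs₁ : 1 < |l₁|
  one_lt_abs₂ : 1 < |l₂|

namespace ExpandingRoots

lemma B_ne_zero (hl : ExpandingRoots A B l₁ l₂) : B ≠ 0 := by
  rintro rfl
  have h₁ : l₁ * (l₁ + A) = 0 := by linear_combination hl.root₁
  have h₂ : l₂ * (l₂ + A) = 0 := by linear_combination hl.root₂
  have h₁0 : l₁ ≠ 0 := abs_pos.1 (zero_lt_one.trans hl.one_lt_abs₁)
  have h₂0 : l₂ ≠ 0 := abs_pos.1 (zero_lt_one.trans hl.one_lt_abs₂)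
  apply hl.ne
  linarith [(mul_eq_zero.1 h₁).resolve_left h₁0, (mul_eq_zero.1 h₂).resolve_left h₂0]

lemma summable_inv_pow_mulVec (hl : ExpandingRoots A B l₁ l₂) (x : Fin 2 → ℝ) :
    Summable fun n => ((M' A B)⁻¹ ^ n) *ᵥ x := by
  have key : ∀ l : ℝ, l ^ 2 + A * l + B = 0 → 1 < |l| →
      Summable fun n => eigenForm l (((M' A B)⁻¹ ^ n) *ᵥ x) := fun l hl' h1 => by
    simp_rw [eigenForm_inv_pow_mulVec hl' hl.B_ne_zero]
    refine (summable_geometric_of_abs_lt_one ?_).mul_right _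
    rw [abs_inv]
    exact inv_lt_one_of_one_lt₀ h1
  exact summable_of_summable_eigenForm hl.ne (key l₁ hl.root₁ hl.one_lt_abs₁)
    (key l₂ hl.root₂ hl.one_lt_abs₂)

lemma hasSum_cutPt (hl : ExpandingRoots A B l₁ l₂) :
    HasSum (fun k : ℕ => ((M' A B)⁻¹ ^ (2 * k + 1)) *ᵥ (((A : ℝ) - 3) • e1)
      + ((M' A B)⁻¹ ^ (2 * k + 2)) *ᵥ (((B : ℝ) - A + 2) • e1)) (cutPt A B) := by
  refine Summable.hasSum (Summable.add ?_ ?_)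
  · exact (hl.summable_inv_pow_mulVec _).comp_injective (f := fun n => _)
      (fun a b h => by simpa using h)
  · exact (hl.summable_inv_pow_mulVec _).comp_injective (f := fun n => _)
      (fun a b h => by simpa using h)

lemma cutPt_eq (hl : ExpandingRoots A B l₁ l₂) :
    digitMap A B (A - 3) (digitMap A B (B - A + 2) (cutPt A B)) = cutPt A B := by
  have hz := hl.hasSum_cutPt
  have hN : Continuous ((M' A B)⁻¹.mulVecLin) :=
    Continuous.matrix_mulVec continuous_const continuous_id
  -- the series is invariant under `M⁻²` up to its first term
  have hfix : cutPt A B - ((M' A B)⁻¹ *ᵥ (((A : ℝ) - 3) • e1)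
      + ((M' A B)⁻¹ ^ 2) *ᵥ (((B : ℝ) - A + 2) • e1)) =
      (M' A B)⁻¹ *ᵥ ((M' A B)⁻¹ *ᵥ cutPt A B) := by
    have h := ((hasSum_nat_add_iff' 1).2 hz).unique (((hz.map _ hN).map _ hN).congr_fun fun k => ?_)
    · simpa using h
    simp only [Function.comp_apply, mulVecLin_apply, mulVec_add, mulVec_mulVec, ← pow_succ']
    ring_nf
  simp only [digitMap, mulVec_add, ← hfix]
  rw [pow_two, ← mulVec_mulVec]
  push_cast
  abel

lemma eigenForm_digitMap_cutPt (hl : ExpandingRoots A B l₁ l₂) (j : ℤ) :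
    eigenForm l₁ (digitMap A B j (digitMap A B (B - A + 2) (cutPt A B))) =
      eigenForm l₁ (cutPt A B) + l₁⁻¹ * (j - (A - 3)) := by
  conv_rhs => rw [← hl.cutPt_eq]
  simp only [eigenForm_digitMap hl.root₁ hl.B_ne_zero]
  push_cast
  ring

end ExpandingRoots

lemma exists_expandingRoots (hAB : A ≤ B) (h5 : 5 ≤ 2 * A - B) :
    ∃ l₁ l₂ : ℝ, ExpandingRoots A B l₁ l₂ ∧ l₁ < 2 - A := by
  have hAB' : (A : ℝ) ≤ B := by exact_mod_cast hAB
  have h5' : (5 : ℝ) ≤ 2 * A - B := by exact_mod_cast h5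
  have hdisc : (0 : ℝ) ≤ A ^ 2 - 4 * B := by nlinarith
  set D := √((A : ℝ) ^ 2 - 4 * B)
  have hD : D ^ 2 = A ^ 2 - 4 * B := Real.sq_sqrt hdisc
  have hD_gt : (A : ℝ) - 4 < D := (Real.lt_sqrt (by linarith)).2 (by nlinarith)
  have hD_lt : D < A - 2 := (Real.sqrt_lt' (by linarith)).2 (by nlinarith)
  refine ⟨(-A - D) / 2, (-A + D) / 2, ⟨?_, ?_, ?_, ?_, ?_⟩, by linarith⟩
  · linear_combination hD / 4
  · linear_combination hD / 4
  · intro h; linarith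
  · rw [lt_abs]; right; linarith
  · rw [lt_abs]; right; linarith

lemma IsTile.cutPt_mem (hT : IsTile A B T) (hTc : IsClosed T) (hne : T.Nonempty)
    (hl : ExpandingRoots A B l₁ l₂) (ha : A - 3 ∈ Set.Icc 0 (B - 1))
    (hb : B - A + 2 ∈ Set.Icc 0 (B - 1)) : cutPt A B ∈ T := by
  obtain ⟨t, ht⟩ := hne
  set z := cutPt A B
  set F := fun x => digitMap A B (A - 3) (digitMap A B (B - A + 2) x)
  have hmaps : Set.MapsTo F T T := fun x hx =>
    hT.digitMap_mem hl.B_ne_zero (hT.digitMap_mem hl.B_ne_zero hx hb) ha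
  have hdist : ∀ n, F^[n] t - z = ((M' A B)⁻¹ ^ (2 * n)) *ᵥ (t - z) := by
    intro n
    induction n with
    | zero => simp
    | succ n ih =>
      calc F^[n + 1] t - z = F (F^[n] t) - F z := by
            rw [Function.iterate_succ_apply', show F z = z from hl.cutPt_eq]
        _ = (M' A B)⁻¹ *ᵥ ((M' A B)⁻¹ *ᵥ (F^[n] t - z)) := by
            simp only [F, digitMap_sub_digitMap]
        _ = ((M' A B)⁻¹ ^ (2 * (n + 1))) *ᵥ (t - z) := by
            rw [ih, mulVec_mulVec, mulVec_mulVec, ← sq, ← pow_add, mul_add, mul_one, add_comm]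
  have hlim : Tendsto (fun n => F^[n] t) atTop (𝓝 z) := by
    have h := ((hl.summable_inv_pow_mulVec (t - z)).tendsto_atTop_zero.comp
      (StrictMono.tendsto_atTop fun a b h => by omega : Tendsto (2 * ·) atTop atTop)).add_const z
    rw [zero_add] at h
    exact h.congr fun n => by rw [Function.comp_apply, ← hdist n, sub_add_cancel]
  exact hTc.mem_of_tendsto hlim (Eventually.of_forall fun n => hmaps.iterate n ht)

lemma hasSum_eigenForm_of_orbit {l : ℝ} (hl : l ^ 2 + A * l + B = 0) (hl1 : 1 < |l|)
    {w : ℕ → Fin 2 → ℝ} {δ : ℕ → ℝ} {R : ℝ} (hw : ∀ n, ‖w n‖ ≤ R)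
    (hrec : ∀ n, M' A B *ᵥ w n = w (n + 1) + δ n • e1) :
    HasSum (fun k => δ k * l⁻¹ ^ (k + 1)) (eigenForm l (w 0)) := by
  have hl0 : l ≠ 0 := abs_pos.1 (zero_lt_one.trans hl1)
  refine hasSum_of_eq_mul_add (y := fun n => eigenForm l (w n)) (C := ‖eigenForm l‖ * R) ?_
    (fun n => ?_) (fun n => ?_)
  · rw [abs_inv]
    exact inv_lt_one_of_one_lt₀ hl1
  · rw [← Real.norm_eq_abs]
    exact ((eigenForm l).le_opNorm _).trans (mul_le_mul_of_nonneg_left (hw n) (norm_nonneg _))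
  · have h := eigenForm_mulVec hl (w n)
    rw [hrec n, map_add, map_smul, eigenForm_e1, smul_eq_mul, mul_one] at h
    rw [h, inv_mul_cancel_left₀ hl0]

lemma ExpandingRoots.eq_of_orbits (hl : ExpandingRoots A B l₁ l₂) {C : ℝ} (hC : C + 1 < |l₁|)
    {u v : ℕ → Fin 2 → ℝ} {du dv : ℕ → ℤ} {R : ℝ} (hu : ∀ n, ‖u n‖ ≤ R) (hv : ∀ n, ‖v n‖ ≤ R)
    (hu' : ∀ n, M' A B *ᵥ u n = u (n + 1) + (du n : ℝ) • e1)
    (hv' : ∀ n, M' A B *ᵥ v n = v (n + 1) + (dv n : ℝ) • e1)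
    (hd : ∀ n, |((du n - dv n : ℤ) : ℝ)| ≤ C) (h₁ : eigenForm l₁ (u 0) = eigenForm l₁ (v 0)) :
    u 0 = v 0 := by
  have hs : ∀ l : ℝ, l ^ 2 + A * l + B = 0 → 1 < |l| →
      HasSum (fun k => ((du k - dv k : ℤ) : ℝ) * l⁻¹ ^ (k + 1)) (eigenForm l (u 0 - v 0)) :=
    fun l hl' hl1 => hasSum_eigenForm_of_orbit hl' hl1 (R := R + R)
      (fun n => (norm_sub_le _ _).trans (add_le_add (hu n) (hv n)))
      (fun n => by rw [mulVec_sub, hu', hv']; push_cast; module)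
  have hC' : (C + 1) * |l₁⁻¹| < 1 := by
    rw [abs_inv, ← div_eq_mul_inv, div_lt_one (zero_lt_one.trans hl.one_lt_abs₁)]
    exact hC
  have hzero : (fun n => du n - dv n) = 0 := by
    refine eq_zero_of_hasSum_zero (inv_ne_zero (abs_pos.1 (zero_lt_one.trans hl.one_lt_abs₁)))
      hC' hd ?_
    have h := hs l₁ hl.root₁ hl.one_lt_abs₁
    rwa [map_sub, h₁, sub_self] at h
  have h₂ : eigenForm l₂ (u 0 - v 0) = 0 := by
    refine (hs l₂ hl.root₂ hl.one_lt_abs₂).unique ?_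
    simpa using hasSum_zero.congr_fun fun k => by simp [sub_eq_zero.1 (congrFun hzero k)]
  exact eq_of_eigenForm_eq hl.ne h₁ (by rwa [map_sub, sub_eq_zero] at h₂)

lemma IsTile.eq_cutPt_of_eigenForm_eq (hT : IsTile A B T) (hTc : IsCompact T)
    (hl : ExpandingRoots A B l₁ l₂) (hl₁ : (A : ℝ) - 2 < |l₁|) (h5 : 5 ≤ 2 * A - B)
    (hz : cutPt A B ∈ T) (hz' : digitMap A B (B - A + 2) (cutPt A B) ∈ T)
    {x : Fin 2 → ℝ} (hx : x ∈ T) (hφ : eigenForm l₁ x = eigenForm l₁ (cutPt A B)) :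
    x = cutPt A B := by
  obtain ⟨R, hR⟩ := isBounded_iff_forall_norm_le.1 hTc.isBounded
  obtain ⟨o, d, rfl, ho⟩ := hT.exists_orbit hx
  -- `cutPt A B` lies on the periodic orbit with digits `A - 3, B - A + 2, A - 3, …`
  let v : ℕ → Fin 2 → ℝ := fun n =>
    if Even n then cutPt A B else digitMap A B (B - A + 2) (cutPt A B)
  let e : ℕ → ℤ := fun n => if Even n then A - 3 else B - A + 2
  have hv : ∀ n, M' A B *ᵥ v n = v (n + 1) + (e n : ℝ) • e1 := by
    intro n
    rcases Nat.even_or_odd n with h | h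
    · simp only [v, e, h, Nat.even_add_one, if_true, not_true_eq_false, if_false]
      conv_lhs => rw [← hl.cutPt_eq]
      exact M'_mulVec_digitMap hl.B_ne_zero _ _
    · simp only [v, e, Nat.not_even_iff_odd.2 h, Nat.even_add_one, if_true, not_false_eq_true,
        if_false]
      exact M'_mulVec_digitMap hl.B_ne_zero _ _
  refine hl.eq_of_orbits (C := A - 3) (by linarith) (fun n => hR _ (ho n).1) (fun n => ?_)
    (fun n => (ho n).2.2) hv (fun n => ?_) hφ
  · by_cases h : Even n
    · simpa [v, h] using hR _ hz
    · simpa [v, h] using hR _ hz'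
  · have hd := (ho n).2.1
    rw [Set.mem_Icc] at hd
    rw [← Int.cast_abs, ← Int.cast_ofNat, ← Int.cast_sub]
    refine Int.cast_le.2 (abs_le.2 ?_)
    by_cases h : Even n <;> simp only [e, h, if_true, if_false] <;> constructor <;> omega

end QuadraticTile

open QuadraticTile in
theorem tile_cutPoint_explicit_general
    (A B : ℤ) (hAB : A ≤ B) (h5 : 5 ≤ 2 * A - B)
    (T : Set (Fin 2 → ℝ)) (hTne : T.Nonempty) (hTcp : IsCompact T)
    (hT : (M' A B).mulVec '' T =
      ⋃ j ∈ Set.Icc (0 : ℤ) (B - 1), (fun x => x + (j : ℝ) • e1) '' T) :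
    cutPt A B ∈ T ∧ ¬ IsPreconnected (T \ {cutPt A B}) := by
  replace hT : IsTile A B T := hT
  obtain ⟨l₁, l₂, hl, hl₁⟩ := exists_expandingRoots hAB h5
  have hA : (5 : ℝ) ≤ A := by exact_mod_cast (by omega : (5 : ℤ) ≤ A)
  have hz : cutPt A B ∈ T :=
    hT.cutPt_mem hTcp.isClosed hTne hl ⟨by omega, by omega⟩ ⟨by omega, by omega⟩
  have hz' := hT.digitMap_mem hl.B_ne_zero hz (j := B - A + 2) ⟨by omega, by omega⟩
  have hlt := hl.eigenForm_digitMap_cutPt (A - 2)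
  have hgt := hl.eigenForm_digitMap_cutPt (A - 4)
  have hinv : l₁⁻¹ < 0 := inv_lt_zero.2 (by linarith)
  push_cast at hlt hgt
  refine ⟨hz, not_isPreconnected_diff_singleton (eigenForm l₁).continuous
    (fun x hx hxz => hT.eq_cutPt_of_eigenForm_eq hTcp hl (lt_abs.2 (Or.inr (by linarith))) h5
      hz hz' hx hxz)
    (hT.digitMap_mem hl.B_ne_zero hz' (j := A - 2) ⟨by omega, by omega⟩)
    (hT.digitMap_mem hl.B_ne_zero hz' (j := A - 4) ⟨by omega, by omega⟩)
    (by linarith) (by linarith)⟩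

/-- For `0 < A ≤ B`, `B ≥ 2`, `2A - B ≥ 5`, the point `z` belongs to
the tile `T` of `M = [[0,-B],[1,-A]]` with digits `{0,…,B-1}·e₁` and is a cut
point of `T`. -/
theorem tile_cutPoint_explicit
    (A B : ℤ) (hA : 0 < A) (hAB : A ≤ B) (hB : 2 ≤ B) (h5 : 5 ≤ 2 * A - B)
    (T : Set (Fin 2 → ℝ)) (hTne : T.Nonempty) (hTcp : IsCompact T)
    (hT : (M' A B).mulVec '' T =
      ⋃ j ∈ Set.Icc (0 : ℤ) (B - 1), (fun x => x + (j : ℝ) • e1) '' T) :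
    cutPt A B ∈ T ∧ ¬ IsPreconnected (T \ {cutPt A B}) :=
  tile_cutPoint_explicit_general A B hAB h5 T hTne hTcp hT
end
end

section
/- Let A, B ∈ ℤ with 0 < A ≤ B, B ≥ 2 and 2A − B ≥ 5 (so A ≥ 5), let M = [[0, −B], [1, −A]] acting on ℝ², and let D₁, D₂ be the subsets of the tile T determined by the lexicographic digit conditions below. Then D₁ ∩ D₂ = {z}, where z = Σ_{k≥0} ( M^{−(2k+1)}·((A−3)·e₁) + M^{−(2k+2)}·((B−A+2)·e₁) ); in particular this intersection is a single point. -/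
noncomputable section

/-- The flipped digit sequence: here `a n` denotes the digit `a_{n+1}` (so the
index `j = n + 1` is odd exactly when `n` is even), and the flipped sequence is
`b_j = a_j` for odd `j` and `b_j = B - 1 - a_j` for even `j`. -/
def flipSeq (B : ℤ) (a : ℕ → ℤ) : ℕ → ℤ :=
  fun n => if n % 2 = 0 then a n else B - 1 - a n

/-- `D₁`: points whose flipped digit sequence is lexicographically `≤` the
constant sequence `(A-3, A-3, …)`. -/
def D1 (A B : ℤ) : Set (Fin 2 → ℝ) :=
  {x | ∃ a : ℕ → ℤ, (∀ n, a n ∈ Set.Icc (0 : ℤ) (B - 1)) ∧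
    (∀ n : ℕ, (∀ m < n, flipSeq B a m = A - 3) → flipSeq B a n ≤ A - 3) ∧
    x = ∑' n : ℕ, ((M' A B)⁻¹ ^ (n + 1)).mulVec ((a n : ℝ) • e1)}

/-- `D₂`: points whose flipped digit sequence is lexicographically `≥` the
constant sequence `(A-3, A-3, …)`. -/
def D2 (A B : ℤ) : Set (Fin 2 → ℝ) :=
  {x | ∃ a : ℕ → ℤ, (∀ n, a n ∈ Set.Icc (0 : ℤ) (B - 1)) ∧
    (∀ n : ℕ, (∀ m < n, flipSeq B a m = A - 3) → A - 3 ≤ flipSeq B a n) ∧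
    x = ∑' n : ℕ, ((M' A B)⁻¹ ^ (n + 1)).mulVec ((a n : ℝ) • e1)}

/-!
Let `r < s < -1` be the roots of `x² + A x + B`. Since `(1, r)` is a left eigenvector of `M`, the
functional `φ v = v₀ + r v₁` maps a point `Σ M^{-(n+1)} aₙ e₁` of the tile to `Σ aₙ r^{-(n+1)}`;
the same holds for `s`, and the two functionals together give convergence of the vector series.
With `ρ = -1/r` this reads `φ x = φ z - ρ Σ dₙ ρⁿ`, where `dₙ = bₙ - (A - 3)` is the deviation of
the flipped digits from the constant sequence. The hypothesis `2A - B ≥ 5` forces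
`-r > max (A - 2) (B - A + 3)`, which is exactly what makes the first nonzero `dₙ` dominate
the tail. Hence `φ x > φ z` for every expansion in `D₁` other than that of `z`, and `φ x < φ z`
for every such expansion in `D₂`; a point of `D₁ ∩ D₂` must therefore be `z`.
-/

open Matrix

section QuadraticRoots

variable {a b x : ℝ}

def lowerRoot (a b : ℝ) : ℝ := (-a - √(a ^ 2 - 4 * b)) / 2

def upperRoot (a b : ℝ) : ℝ := (-a + √(a ^ 2 - 4 * b)) / 2

lemma lowerRoot_isRoot (h : 0 ≤ a ^ 2 - 4 * b) : lowerRoot a b ^ 2 + a * lowerRoot a b + b = 0 := by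
  have := Real.sq_sqrt h
  unfold lowerRoot
  linear_combination (1 / 4 : ℝ) * this

lemma upperRoot_isRoot (h : 0 ≤ a ^ 2 - 4 * b) : upperRoot a b ^ 2 + a * upperRoot a b + b = 0 := by
  have := Real.sq_sqrt h
  unfold upperRoot
  linear_combination (1 / 4 : ℝ) * this

lemma discrim_pos_of_neg (h : x ^ 2 + a * x + b < 0) : 0 < a ^ 2 - 4 * b := by
  nlinarith [sq_nonneg (2 * x + a)]

lemma abs_two_mul_add_lt_sqrt (h : x ^ 2 + a * x + b < 0) : |2 * x + a| < √(a ^ 2 - 4 * b) := by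
  rw [← Real.sqrt_sq_eq_abs]
  exact Real.sqrt_lt_sqrt (sq_nonneg _) (by linarith)

lemma lowerRoot_lt_of_neg (h : x ^ 2 + a * x + b < 0) : lowerRoot a b < x := by
  have := abs_two_mul_add_lt_sqrt h
  unfold lowerRoot
  linarith [neg_abs_le (2 * x + a)]

lemma lt_upperRoot_of_neg (h : x ^ 2 + a * x + b < 0) : x < upperRoot a b := by
  have := abs_two_mul_add_lt_sqrt h
  unfold upperRoot
  linarith [le_abs_self (2 * x + a)]

lemma upperRoot_lt_of_pos (h : 0 < x ^ 2 + a * x + b) (hx : 0 < 2 * x + a) : upperRoot a b < x := by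
  have : √(a ^ 2 - 4 * b) < 2 * x + a := (Real.sqrt_lt' hx).2 (by linarith)
  unfold upperRoot
  linarith

end QuadraticRoots

lemma summable_mul_pow_of_abs_le {c : ℕ → ℝ} {K ρ : ℝ} (hc : ∀ n, |c n| ≤ K) (hρ : |ρ| < 1) :
    Summable fun n => c n * ρ ^ n := by
  refine .of_norm_bounded ((summable_geometric_of_lt_one (abs_nonneg ρ) hρ).mul_left K) fun n => ?_
  rw [Real.norm_eq_abs, abs_mul, abs_pow]
  exact mul_le_mul_of_nonneg_right (hc n) (pow_nonneg (abs_nonneg ρ) n)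

lemma abs_intCast_le_of_mem_Icc {d L U : ℤ} (h : d ∈ Set.Icc L U) :
    |(d : ℝ)| ≤ max (-L : ℝ) U := by
  have h0 : (L : ℝ) ≤ d := by exact_mod_cast h.1
  have h1 : (d : ℝ) ≤ U := by exact_mod_cast h.2
  exact abs_le.2 ⟨by linarith [le_max_left (-L : ℝ) U], h1.trans (le_max_right _ _)⟩

lemma tsum_mul_inv_pow_neg_of_first_le_neg_one {μ U K : ℝ} (hμ : 1 < μ) (hU : U + 1 < μ)
    {c : ℕ → ℝ} (hK : ∀ n, |c n| ≤ K) (hc : ∀ n, c n ≤ U) (h0 : c 0 ≤ -1) :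
    ∑' n, c n * (μ⁻¹) ^ n < 0 := by
  have hρ0 : 0 < μ⁻¹ := by positivity
  have hρ1 : μ⁻¹ < 1 := inv_lt_one_of_one_lt₀ hμ
  have hsum := summable_mul_pow_of_abs_le hK (by rwa [abs_of_pos hρ0])
  have hgeom : Summable fun n : ℕ => U * μ⁻¹ * (μ⁻¹) ^ n :=
    (summable_geometric_of_lt_one hρ0.le hρ1).mul_left _
  have htail : ∑' n, c (n + 1) * (μ⁻¹) ^ (n + 1) ≤ U * μ⁻¹ * (1 - μ⁻¹)⁻¹ := by
    rw [← tsum_geometric_of_lt_one hρ0.le hρ1, ← tsum_mul_left]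
    refine Summable.tsum_le_tsum (fun n => ?_) ((summable_nat_add_iff 1).2 hsum) hgeom
    calc c (n + 1) * (μ⁻¹) ^ (n + 1) ≤ U * (μ⁻¹) ^ (n + 1) :=
          mul_le_mul_of_nonneg_right (hc _) (by positivity)
      _ = U * μ⁻¹ * (μ⁻¹) ^ n := by ring
  have hbound : U * μ⁻¹ * (1 - μ⁻¹)⁻¹ < 1 := by
    have : U * μ⁻¹ * (1 - μ⁻¹)⁻¹ = U / (μ - 1) := by
      have : μ - 1 ≠ 0 := by linarith
      field_simp
    rw [this, div_lt_one (by linarith)]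
    linarith
  rw [hsum.tsum_eq_zero_add, pow_zero, mul_one]
  linarith

lemma tsum_mul_inv_pow_neg_of_lex {μ : ℝ} {L U : ℤ} (hμ : 1 < μ) (hU : (U : ℝ) + 1 < μ)
    {d : ℕ → ℤ} (hd : ∀ n, d n ∈ Set.Icc L U) (hlex : ∀ n, (∀ m < n, d m = 0) → d n ≤ 0)
    (hne : d ≠ 0) : ∑' n, (d n : ℝ) * (μ⁻¹) ^ n < 0 := by
  have hK n := abs_intCast_le_of_mem_Icc (hd n)
  have hex : ∃ n, d n ≠ 0 := by by_contra! h; exact hne (funext h)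
  set n₀ := Nat.find hex
  have hbefore : ∀ m < n₀, d m = 0 := fun m hm => not_not.1 (Nat.find_min hex hm)
  have hfirst : d n₀ ≤ -1 := by
    have hspec : d n₀ ≠ 0 := Nat.find_spec hex
    have := hlex n₀ hbefore
    omega
  have hprefix : ∑ i ∈ Finset.range n₀, (d i : ℝ) * (μ⁻¹) ^ i = 0 :=
    Finset.sum_eq_zero fun i hi => by simp [hbefore i (Finset.mem_range.1 hi)]
  have htail : ∑' n, (d (n + n₀) : ℝ) * (μ⁻¹) ^ n < 0 :=
    tsum_mul_inv_pow_neg_of_first_le_neg_one hμ hU (fun n => hK _)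
      (fun n => by exact_mod_cast (hd _).2) (by rw [zero_add]; exact_mod_cast hfirst)
  have hρ : |μ⁻¹| < 1 := by
    rw [abs_inv, abs_of_pos (by linarith)]; exact inv_lt_one_of_one_lt₀ hμ
  rw [← (summable_mul_pow_of_abs_le hK hρ).sum_add_tsum_nat_add n₀, hprefix, zero_add]
  have hfactor : ∑' n, (d (n + n₀) : ℝ) * (μ⁻¹) ^ (n + n₀)
      = (μ⁻¹) ^ n₀ * ∑' n, (d (n + n₀) : ℝ) * (μ⁻¹) ^ n := by
    rw [← tsum_mul_left]; congr 1 with n; ring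
  rw [hfactor]
  exact mul_neg_of_pos_of_neg (by positivity) htail

lemma tsum_mul_inv_pow_pos_of_lex {μ : ℝ} {L U : ℤ} (hμ : 1 < μ) (hL : (-L : ℝ) + 1 < μ)
    {d : ℕ → ℤ} (hd : ∀ n, d n ∈ Set.Icc L U) (hlex : ∀ n, (∀ m < n, d m = 0) → 0 ≤ d n)
    (hne : d ≠ 0) : 0 < ∑' n, (d n : ℝ) * (μ⁻¹) ^ n := by
  have h := tsum_mul_inv_pow_neg_of_lex hμ (U := -L) (by exact_mod_cast hL) (d := fun n => -d n)
    (fun n => ⟨neg_le_neg (hd n).2, neg_le_neg (hd n).1⟩)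
    (fun n hn => by simpa using hlex n (by simpa using hn))
    (fun h => hne (funext fun n => by simpa using congrFun h n))
  simp only [Int.cast_neg, neg_mul, tsum_neg] at h
  linarith

section EigenFunctional

def eigenFunctional (l : ℝ) : (Fin 2 → ℝ) →L[ℝ] ℝ :=
  ContinuousLinearMap.proj 0 + l • ContinuousLinearMap.proj 1

@[simp]
lemma eigenFunctional_apply (l : ℝ) (v : Fin 2 → ℝ) : eigenFunctional l v = v 0 + l * v 1 := rfl

@[simp]
lemma eigenFunctional_e1 (l : ℝ) : eigenFunctional l e1 = 1 := by simp [e1]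

lemma summable_of_summable_eigenFunctional {r s : ℝ} (hrs : r ≠ s) {f : ℕ → Fin 2 → ℝ}
    (hr : Summable fun n => eigenFunctional r (f n))
    (hs : Summable fun n => eigenFunctional s (f n)) : Summable f := by
  have hf : f = fun n => (r - s)⁻¹ •
      (eigenFunctional r (f n) • ![-s, 1] + eigenFunctional s (f n) • ![r, -1]) := by
    have : r - s ≠ 0 := sub_ne_zero.2 hrs
    funext n i
    fin_cases i <;>
      simp only [Fin.zero_eta, Fin.mk_one, eigenFunctional_apply, Pi.smul_apply, Pi.add_apply,
        smul_eq_mul, cons_val_zero, cons_val_one, cons_val_fin_one] <;> field_simp <;> ring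
  rw [hf]
  exact ((hr.smul_const _).add (hs.smul_const _)).const_smul _

lemma det_M' (A B : ℤ) : (M' A B).det = B := by simp [M', Matrix.det_fin_two_of]

variable {A B : ℤ} {l : ℝ}

lemma eigenFunctional_mulVec (hl : l ^ 2 + A * l + B = 0) (v : Fin 2 → ℝ) :
    eigenFunctional l (M' A B *ᵥ v) = l * eigenFunctional l v := by
  simp only [M', cons_mulVec, dotProduct, Fin.sum_univ_two, cons_val_zero, cons_val_one,
    cons_val_fin_one, empty_mulVec, eigenFunctional_apply]
  linear_combination (-v 1) * hl

lemma eigenFunctional_inv_pow_mulVec (hB : (B : ℝ) ≠ 0) (hl : l ^ 2 + A * l + B = 0) (k : ℕ)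
    (v : Fin 2 → ℝ) :
    eigenFunctional l (((M' A B)⁻¹ ^ k) *ᵥ v) = (l⁻¹) ^ k * eigenFunctional l v := by
  have hl0 : l ≠ 0 := by rintro rfl; simp_all
  have hunit : IsUnit (M' A B).det := by simpa [det_M'] using hB
  induction k with
  | zero => simp
  | succ k ih =>
    have h := eigenFunctional_mulVec hl ((M' A B)⁻¹ ^ (k + 1) *ᵥ v)
    rw [Matrix.mulVec_mulVec, pow_succ', ← mul_assoc, Matrix.mul_nonsing_inv _ hunit, one_mul,
      ← pow_succ', ih] at h
    calc eigenFunctional l (((M' A B)⁻¹ ^ (k + 1)) *ᵥ v)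
        = l⁻¹ * (l * eigenFunctional l (((M' A B)⁻¹ ^ (k + 1)) *ᵥ v)) := by field_simp
      _ = (l⁻¹) ^ (k + 1) * eigenFunctional l v := by rw [← h, pow_succ']; ring

lemma summable_eigenFunctional_inv_pow_mulVec (hB : (B : ℝ) ≠ 0) (hl : l ^ 2 + A * l + B = 0)
    (hl1 : 1 < |l|) {c : ℕ → ℝ} {K : ℝ} (hc : ∀ n, |c n| ≤ K) :
    Summable fun n => eigenFunctional l (((M' A B)⁻¹ ^ (n + 1)) *ᵥ (c n • e1)) := by
  have hρ : |l⁻¹| < 1 := by rw [abs_inv]; exact inv_lt_one_of_one_lt₀ hl1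
  simp_rw [eigenFunctional_inv_pow_mulVec hB hl, map_smul, eigenFunctional_e1, smul_eq_mul,
    pow_succ, mul_one]
  exact ((summable_mul_pow_of_abs_le hc hρ).mul_right l⁻¹).congr fun n => by ring

lemma summable_inv_pow_mulVec {r s : ℝ} (hB : (B : ℝ) ≠ 0) (hr : r ^ 2 + A * r + B = 0)
    (hs : s ^ 2 + A * s + B = 0) (hrs : r ≠ s) (hr1 : 1 < |r|) (hs1 : 1 < |s|) {c : ℕ → ℝ}
    {K : ℝ} (hc : ∀ n, |c n| ≤ K) :
    Summable fun n => ((M' A B)⁻¹ ^ (n + 1)) *ᵥ (c n • e1) :=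
  summable_of_summable_eigenFunctional hrs
    (summable_eigenFunctional_inv_pow_mulVec hB hr hr1 hc)
    (summable_eigenFunctional_inv_pow_mulVec hB hs hs1 hc)

lemma hasSum_eigenFunctional_tsum_inv_pow_mulVec (hB : (B : ℝ) ≠ 0)
    (hl : l ^ 2 + A * l + B = 0) {c : ℕ → ℝ}
    (hc : Summable fun n => ((M' A B)⁻¹ ^ (n + 1)) *ᵥ (c n • e1)) :
    HasSum (fun n => c n * (l⁻¹) ^ (n + 1))
      (eigenFunctional l (∑' n, ((M' A B)⁻¹ ^ (n + 1)) *ᵥ (c n • e1))) := by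
  convert hc.hasSum.mapL (eigenFunctional l) using 2 with n
  rw [eigenFunctional_inv_pow_mulVec hB hl, map_smul, eigenFunctional_e1, smul_eq_mul, mul_one,
    mul_comm]

end EigenFunctional

section Digits

variable {A B : ℤ}

lemma quadratic_neg_at_neg_sub_two (h5 : 5 ≤ 2 * A - B) :
    (-((A : ℝ) - 2)) ^ 2 + A * (-((A : ℝ) - 2)) + B < 0 := by
  have : (B : ℝ) + 5 ≤ 2 * A := by exact_mod_cast (by omega : B + 5 ≤ 2 * A)
  nlinarith

lemma lowerRoot_lt_neg_sub_two (h5 : 5 ≤ 2 * A - B) : lowerRoot A B < -((A : ℝ) - 2) :=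
  lowerRoot_lt_of_neg (quadratic_neg_at_neg_sub_two h5)

lemma lowerRoot_lt_neg_sub_add_three (hAB : A ≤ B) (h5 : 5 ≤ 2 * A - B) :
    lowerRoot A B < -((B : ℝ) - A + 3) := by
  have h1 : (A : ℝ) ≤ B := by exact_mod_cast hAB
  have h2 : (B : ℝ) + 5 ≤ 2 * A := by exact_mod_cast (by omega : B + 5 ≤ 2 * A)
  refine lowerRoot_lt_of_neg ?_
  nlinarith [mul_nonneg (sub_nonneg.2 h2) (by linarith : (0 : ℝ) ≤ B - A + 3)]

lemma upperRoot_lt_neg_one (hAB : A ≤ B) (h5 : 5 ≤ 2 * A - B) : upperRoot A B < -1 := by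
  have h1 : (A : ℝ) ≤ B := by exact_mod_cast hAB
  have h2 : (5 : ℝ) ≤ A := by exact_mod_cast (by omega : 5 ≤ A)
  exact upperRoot_lt_of_pos (by linarith) (by linarith)

lemma lowerRoot_lt_upperRoot (h5 : 5 ≤ 2 * A - B) : lowerRoot A B < upperRoot A B :=
  (lowerRoot_lt_neg_sub_two h5).trans (lt_upperRoot_of_neg (quadratic_neg_at_neg_sub_two h5))

lemma one_lt_neg_lowerRoot (hAB : A ≤ B) (h5 : 5 ≤ 2 * A - B) : 1 < -lowerRoot A B := by
  have hA : (5 : ℝ) ≤ A := by exact_mod_cast (by omega : 5 ≤ A)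
  linarith [lowerRoot_lt_neg_sub_two h5]

lemma summable_digitTerms (hAB : A ≤ B) (h5 : 5 ≤ 2 * A - B) {c : ℕ → ℝ} {K : ℝ}
    (hc : ∀ n, |c n| ≤ K) : Summable fun n => ((M' A B)⁻¹ ^ (n + 1)) *ᵥ (c n • e1) := by
  have hdisc := (discrim_pos_of_neg (quadratic_neg_at_neg_sub_two h5)).le
  have hr := lowerRoot_lt_neg_sub_two h5
  have hs := upperRoot_lt_neg_one hAB h5
  have hA : (5 : ℝ) ≤ A := by exact_mod_cast (by omega : 5 ≤ A)
  have hB : (B : ℝ) ≠ 0 := by exact_mod_cast (by omega : B ≠ 0)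
  refine summable_inv_pow_mulVec hB (lowerRoot_isRoot hdisc) (upperRoot_isRoot hdisc)
    (lowerRoot_lt_upperRoot h5).ne ?_ ?_ hc
  · rw [abs_of_neg (by linarith)]; linarith
  · rw [abs_of_neg (by linarith)]; linarith

def cutDigits (A B : ℤ) : ℕ → ℤ := fun n => if n % 2 = 0 then A - 3 else B - A + 2

def digitSum (A B : ℤ) (a : ℕ → ℤ) : Fin 2 → ℝ :=
  ∑' n, ((M' A B)⁻¹ ^ (n + 1)) *ᵥ ((a n : ℝ) • e1)

lemma flipSeq_cutDigits (n : ℕ) : flipSeq B (cutDigits A B) n = A - 3 := by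
  unfold flipSeq cutDigits; split <;> ring

lemma flipSeq_sub_eq (a : ℕ → ℤ) (n : ℕ) :
    flipSeq B a n - (A - 3) = (-1) ^ n * (a n - cutDigits A B n) := by
  unfold flipSeq cutDigits
  rcases Nat.even_or_odd n with hn | hn
  · rw [if_pos (Nat.even_iff.1 hn), if_pos (Nat.even_iff.1 hn), hn.neg_one_pow]; ring
  · have h : n % 2 ≠ 0 := by rw [Nat.odd_iff] at hn; omega
    rw [if_neg h, if_neg h, hn.neg_one_pow]; ring

lemma flipSeq_mem {a : ℕ → ℤ} (ha : ∀ n, a n ∈ Set.Icc 0 (B - 1)) (n : ℕ) :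
    flipSeq B a n ∈ Set.Icc 0 (B - 1) := by
  have := ha n
  simp only [Set.mem_Icc, flipSeq] at *
  split <;> omega

lemma flipSeq_sub_mem {a : ℕ → ℤ} (ha : ∀ n, a n ∈ Set.Icc 0 (B - 1)) (n : ℕ) :
    flipSeq B a n - (A - 3) ∈ Set.Icc (3 - A) (B - A + 2) := by
  obtain ⟨h0, h1⟩ := flipSeq_mem ha n
  constructor <;> omega

lemma cutDigits_mem (hA : 3 ≤ A) (hAB : A ≤ B) (n : ℕ) :
    cutDigits A B n ∈ Set.Icc 0 (B - 1) := by
  simp only [Set.mem_Icc, cutDigits]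
  split <;> omega

lemma abs_digit_le {a : ℕ → ℤ} (ha : ∀ n, a n ∈ Set.Icc 0 (B - 1)) (n : ℕ) : |(a n : ℝ)| ≤ B := by
  obtain ⟨h0, h1⟩ := ha n
  exact abs_le.2 ⟨by exact_mod_cast (by omega : -B ≤ a n), by exact_mod_cast (by omega : a n ≤ B)⟩

lemma digitSum_cutDigits (hAB : A ≤ B) (h5 : 5 ≤ 2 * A - B) :
    digitSum A B (cutDigits A B) = cutPt A B := by
  set f := fun n => ((M' A B)⁻¹ ^ (n + 1)) *ᵥ ((cutDigits A B n : ℝ) • e1)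
  have hsum : Summable f :=
    summable_digitTerms hAB h5 (abs_digit_le (cutDigits_mem (by omega) hAB))
  have heven : Summable fun k => f (2 * k) :=
    hsum.comp_injective (mul_right_injective₀ two_ne_zero)
  have hodd : Summable fun k => f (2 * k + 1) :=
    hsum.comp_injective ((add_left_injective 1).comp (mul_right_injective₀ two_ne_zero))
  rw [digitSum, ← tsum_even_add_odd heven hodd, ← heven.tsum_add hodd, cutPt]
  congr 1 with k : 1
  have h0 : 2 * k % 2 = 0 := by omega
  have h1 : (2 * k + 1) % 2 ≠ 0 := by omega
  simp only [f, cutDigits, if_pos h0, if_neg h1]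
  push_cast
  rfl

lemma hasSum_eigenFunctional_digitSum (hAB : A ≤ B) (h5 : 5 ≤ 2 * A - B) {a : ℕ → ℤ}
    (ha : ∀ n, a n ∈ Set.Icc 0 (B - 1)) :
    HasSum (fun n => (a n : ℝ) * ((lowerRoot A B)⁻¹) ^ (n + 1))
      (eigenFunctional (lowerRoot A B) (digitSum A B a)) :=
  hasSum_eigenFunctional_tsum_inv_pow_mulVec (by exact_mod_cast (by omega : B ≠ 0))
    (lowerRoot_isRoot (discrim_pos_of_neg (quadratic_neg_at_neg_sub_two h5)).le)
    (summable_digitTerms hAB h5 (abs_digit_le ha))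

lemma eigenFunctional_digitSum_eq (hAB : A ≤ B) (h5 : 5 ≤ 2 * A - B) {a : ℕ → ℤ}
    (ha : ∀ n, a n ∈ Set.Icc 0 (B - 1)) :
    eigenFunctional (lowerRoot A B) (digitSum A B a) = eigenFunctional (lowerRoot A B) (cutPt A B)
      - (-lowerRoot A B)⁻¹ *
        ∑' n, ((flipSeq B a n - (A - 3) : ℤ) : ℝ) * ((-lowerRoot A B)⁻¹) ^ n := by
  set ρ := (-lowerRoot A B)⁻¹
  have hx := hasSum_eigenFunctional_digitSum hAB h5 ha
  have hz := hasSum_eigenFunctional_digitSum hAB h5 (cutDigits_mem (by omega) hAB)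
  rw [digitSum_cutDigits hAB h5] at hz
  have hρ : |ρ| < 1 := by
    rw [abs_inv, abs_of_pos (by linarith [one_lt_neg_lowerRoot hAB h5])]
    exact inv_lt_one_of_one_lt₀ (one_lt_neg_lowerRoot hAB h5)
  have hd := summable_mul_pow_of_abs_le
    (fun n => abs_intCast_le_of_mem_Icc (flipSeq_sub_mem (A := A) ha n)) hρ
  have hterm : ∀ n, (a n : ℝ) * ((lowerRoot A B)⁻¹) ^ (n + 1)
      - (cutDigits A B n : ℝ) * ((lowerRoot A B)⁻¹) ^ (n + 1)
      = -ρ * (((flipSeq B a n - (A - 3) : ℤ) : ℝ) * ρ ^ n) := by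
    intro n
    rw [show (lowerRoot A B)⁻¹ = -ρ by rw [← inv_neg, neg_neg], flipSeq_sub_eq, pow_succ,
      neg_pow ρ n]
    push_cast
    ring
  have hdiff := (hx.sub hz).unique ((hd.hasSum.mul_left (-ρ)).congr_fun hterm)
  linarith

lemma flipSeq_sub_ne_zero {a : ℕ → ℤ} (hne : a ≠ cutDigits A B) :
    (fun n => flipSeq B a n - (A - 3)) ≠ 0 := by
  refine fun h => hne (funext fun n => ?_)
  have := congrFun h n
  rw [Pi.zero_apply, flipSeq_sub_eq, mul_eq_zero] at this
  exact sub_eq_zero.1 (this.resolve_left (pow_ne_zero _ (by norm_num)))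

lemma eigenFunctional_cutPt_lt_of_lex_le (hAB : A ≤ B) (h5 : 5 ≤ 2 * A - B) {a : ℕ → ℤ}
    (ha : ∀ n, a n ∈ Set.Icc 0 (B - 1))
    (hlex : ∀ n, (∀ m < n, flipSeq B a m = A - 3) → flipSeq B a n ≤ A - 3)
    (hne : a ≠ cutDigits A B) :
    eigenFunctional (lowerRoot A B) (cutPt A B) <
      eigenFunctional (lowerRoot A B) (digitSum A B a) := by
  have hμ := one_lt_neg_lowerRoot hAB h5
  have hneg := tsum_mul_inv_pow_neg_of_lex hμ (U := B - A + 2)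
    (by push_cast; linarith [lowerRoot_lt_neg_sub_add_three hAB h5]) (flipSeq_sub_mem ha)
    (fun n hn => sub_nonpos.2 (hlex n fun m hm => sub_eq_zero.1 (hn m hm)))
    (flipSeq_sub_ne_zero hne)
  rw [eigenFunctional_digitSum_eq hAB h5 ha]
  nlinarith [inv_pos.2 (by linarith : 0 < -lowerRoot A B)]

lemma eigenFunctional_lt_cutPt_of_lex_ge (hAB : A ≤ B) (h5 : 5 ≤ 2 * A - B) {a : ℕ → ℤ}
    (ha : ∀ n, a n ∈ Set.Icc 0 (B - 1))
    (hlex : ∀ n, (∀ m < n, flipSeq B a m = A - 3) → A - 3 ≤ flipSeq B a n)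
    (hne : a ≠ cutDigits A B) :
    eigenFunctional (lowerRoot A B) (digitSum A B a) <
      eigenFunctional (lowerRoot A B) (cutPt A B) := by
  have hμ := one_lt_neg_lowerRoot hAB h5
  have hpos := tsum_mul_inv_pow_pos_of_lex hμ (L := 3 - A)
    (by push_cast; linarith [lowerRoot_lt_neg_sub_two h5]) (flipSeq_sub_mem ha)
    (fun n hn => sub_nonneg.2 (hlex n fun m hm => sub_eq_zero.1 (hn m hm)))
    (flipSeq_sub_ne_zero hne)
  rw [eigenFunctional_digitSum_eq hAB h5 ha]
  nlinarith [inv_pos.2 (by linarith : 0 < -lowerRoot A B)]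

end Digits

theorem D1_inter_D2_eq_singleton_general
    (A B : ℤ) (hAB : A ≤ B) (h5 : 5 ≤ 2 * A - B) :
    D1 A B ∩ D2 A B = {cutPt A B} := by
  ext x
  constructor
  · rintro ⟨⟨a, ha, hlex, rfl⟩, a', ha', hlex', hx⟩
    change digitSum A B a = digitSum A B a' at hx
    by_contra hne
    have h : a ≠ cutDigits A B := by rintro rfl; exact hne (digitSum_cutDigits hAB h5)
    have h' : a' ≠ cutDigits A B := by rintro rfl; exact hne (hx.trans (digitSum_cutDigits hAB h5))
    have hgt := eigenFunctional_cutPt_lt_of_lex_le hAB h5 ha hlex h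
    have hlt := eigenFunctional_lt_cutPt_of_lex_ge hAB h5 ha' hlex' h'
    rw [hx] at hgt
    exact lt_asymm hgt hlt
  · rintro rfl
    have hmem := cutDigits_mem (by omega) hAB
    have hz := (digitSum_cutDigits hAB h5).symm
    exact ⟨⟨cutDigits A B, hmem, fun n _ => (flipSeq_cutDigits n).le, hz⟩,
      ⟨cutDigits A B, hmem, fun n _ => (flipSeq_cutDigits n).ge, hz⟩⟩

/-- For `0 < A ≤ B`, `B ≥ 2`, `2A - B ≥ 5`, the intersection
`D₁ ∩ D₂` is the singleton `{z}`. -/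
theorem D1_inter_D2_eq_singleton
    (A B : ℤ) (hA : 0 < A) (hAB : A ≤ B) (hB : 2 ≤ B) (h5 : 5 ≤ 2 * A - B) :
    D1 A B ∩ D2 A B = {cutPt A B} :=
  D1_inter_D2_eq_singleton_general A B hAB h5
end
end

section
/- Let A, B ∈ ℤ with 1 ≤ A ≤ B and B ≥ 2, let M = [[0, −B], [1, −A]], and let R = {(1,0), (−1,0), (A−1,1), (−A+1,−1), (A,1), (−A,−1)} ⊂ ℤ². Define a directed graph G on vertex set R by putting an edge from s to s' whenever there exist a, a' ∈ {0, …, B−1} with M·s + a'·e₁ = s' + a·e₁ (where e₁ = (1,0)). Then G is strongly connected: for all s, s' ∈ R there is a directed path in G from s to s'. -/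
/-- The set `R = {(1,0), (-1,0), (A-1,1), (-A+1,-1), (A,1), (-A,-1)} ⊂ ℤ²`. -/
def nbrSet (A : ℤ) : Set (Fin 2 → ℤ) :=
  {![1, 0], ![-1, 0], ![A - 1, 1], ![-A + 1, -1], ![A, 1], ![-A, -1]}

/-- The edge relation of the graph `G`: there is an edge `s → s'` whenever
`M·s + a'·e₁ = s' + a·e₁` for some digits `a, a' ∈ {0, …, B-1}`. -/
def edgeRel (A B : ℤ) (s s' : Fin 2 → ℤ) : Prop :=
  ∃ a ∈ Set.Icc (0 : ℤ) (B - 1), ∃ a' ∈ Set.Icc (0 : ℤ) (B - 1),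
    (!![0, -B; 1, -A] : Matrix (Fin 2) (Fin 2) ℤ).mulVec s
      + a' • (![1, 0] : Fin 2 → ℤ) = s' + a • ![1, 0]

section Edges

variable {A B : ℤ}

lemma edge13 (hA : 1 ≤ A) (hAB : A ≤ B) : edgeRel A B ![1,0] ![A-1,1] := by
  refine ⟨0, ⟨le_refl _, by omega⟩, A-1, ⟨by omega, by omega⟩, ?_⟩
  funext i; fin_cases i <;> simp [Matrix.mulVec, dotProduct]

lemma edge24 (hA : 1 ≤ A) (hAB : A ≤ B) : edgeRel A B ![-1,0] ![-A+1,-1] := by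
  refine ⟨A-1, ⟨by omega, by omega⟩, 0, ⟨le_refl _, by omega⟩, ?_⟩
  funext i; fin_cases i <;> simp [Matrix.mulVec, dotProduct] <;> ring

lemma edge36 (hA : 1 ≤ A) (hAB : A ≤ B) : edgeRel A B ![A-1,1] ![-A,-1] := by
  refine ⟨0, ⟨le_refl _, by omega⟩, B-A, ⟨by omega, by omega⟩, ?_⟩
  funext i; fin_cases i <;> simp [Matrix.mulVec, dotProduct] <;> ring

lemma edge45 (hA : 1 ≤ A) (hAB : A ≤ B) : edgeRel A B ![-A+1,-1] ![A,1] := by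
  refine ⟨B-A, ⟨by omega, by omega⟩, 0, ⟨le_refl _, by omega⟩, ?_⟩
  funext i; fin_cases i <;> simp [Matrix.mulVec, dotProduct] <;> ring

lemma edge52 (hA : 1 ≤ A) (hAB : A ≤ B) (hB : 2 ≤ B) : edgeRel A B ![A,1] ![-1,0] := by
  refine ⟨0, ⟨le_refl _, by omega⟩, B-1, ⟨by omega, by omega⟩, ?_⟩
  funext i; fin_cases i <;> simp [Matrix.mulVec, dotProduct] <;> ring

lemma edge61 (hA : 1 ≤ A) (hAB : A ≤ B) (hB : 2 ≤ B) : edgeRel A B ![-A,-1] ![1,0] := by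
  refine ⟨B-1, ⟨by omega, by omega⟩, 0, ⟨le_refl _, by omega⟩, ?_⟩
  funext i; fin_cases i <;> simp [Matrix.mulVec, dotProduct] <;> ring

lemma edge15 (hA : 1 ≤ A) (h : A < B) : edgeRel A B ![1,0] ![A,1] := by
  refine ⟨0, ⟨le_refl _, by omega⟩, A, ⟨by omega, by omega⟩, ?_⟩
  funext i; fin_cases i <;> simp [Matrix.mulVec, dotProduct] <;> ring

lemma edge26 (hA : 1 ≤ A) (h : A < B) : edgeRel A B ![-1,0] ![-A,-1] := by
  refine ⟨A, ⟨by omega, by omega⟩, 0, ⟨le_refl _, by omega⟩, ?_⟩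
  funext i; fin_cases i <;> simp [Matrix.mulVec, dotProduct] <;> ring

lemma edge34 (hAB : A ≤ B) (h : 2 ≤ A) : edgeRel A B ![A-1,1] ![-A+1,-1] := by
  refine ⟨0, ⟨le_refl _, by omega⟩, B-A+1, ⟨by omega, by omega⟩, ?_⟩
  funext i; fin_cases i <;> simp [Matrix.mulVec, dotProduct] <;> ring

lemma edge43 (hAB : A ≤ B) (h : 2 ≤ A) : edgeRel A B ![-A+1,-1] ![A-1,1] := by
  refine ⟨B-A+1, ⟨by omega, by omega⟩, 0, ⟨le_refl _, by omega⟩, ?_⟩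
  funext i; fin_cases i <;> simp [Matrix.mulVec, dotProduct] <;> ring

end Edges

/-- For `1 ≤ A ≤ B`, `B ≥ 2`, the graph `G` with vertex set `R`
and the above edges is strongly connected: any vertex is reachable from any
other by a directed path. -/
theorem contact_graph_strongly_connected
    (A B : ℤ) (hA : 1 ≤ A) (hAB : A ≤ B) (hB : 2 ≤ B) :
    ∀ s ∈ nbrSet A, ∀ s' ∈ nbrSet A,
      Relation.ReflTransGen
        (fun u w => u ∈ nbrSet A ∧ w ∈ nbrSet A ∧ edgeRel A B u w) s s' := by
  set R : (Fin 2 → ℤ) → (Fin 2 → ℤ) → Prop :=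
    fun u w => u ∈ nbrSet A ∧ w ∈ nbrSet A ∧ edgeRel A B u w with hR
  have m1 : ![1,0] ∈ nbrSet A := by simp [nbrSet]
  have m2 : ![-1,0] ∈ nbrSet A := by simp [nbrSet]
  have m3 : ![A-1,1] ∈ nbrSet A := by simp [nbrSet]
  have m4 : ![-A+1,-1] ∈ nbrSet A := by simp [nbrSet]
  have m5 : ![A,1] ∈ nbrSet A := by simp [nbrSet]
  have m6 : ![-A,-1] ∈ nbrSet A := by simp [nbrSet]
  have s13 : Relation.ReflTransGen R ![1,0] ![A-1,1] :=
    .single ⟨m1, m3, edge13 hA hAB⟩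
  have s24 : Relation.ReflTransGen R ![-1,0] ![-A+1,-1] :=
    .single ⟨m2, m4, edge24 hA hAB⟩
  have s36 : Relation.ReflTransGen R ![A-1,1] ![-A,-1] :=
    .single ⟨m3, m6, edge36 hA hAB⟩
  have s45 : Relation.ReflTransGen R ![-A+1,-1] ![A,1] :=
    .single ⟨m4, m5, edge45 hA hAB⟩
  have s52 : Relation.ReflTransGen R ![A,1] ![-1,0] :=
    .single ⟨m5, m2, edge52 hA hAB hB⟩
  have s61 : Relation.ReflTransGen R ![-A,-1] ![1,0] :=
    .single ⟨m6, m1, edge61 hA hAB hB⟩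
  -- cross edges between the two 3-cycles
  have cross : Relation.ReflTransGen R ![1,0] ![-A+1,-1] ∧
      Relation.ReflTransGen R ![-A+1,-1] ![1,0] := by
    rcases lt_or_ge A B with h | h
    · -- use 1→5 and 2→6
      have s15 : Relation.ReflTransGen R ![1,0] ![A,1] :=
        .single ⟨m1, m5, edge15 hA h⟩
      have s26 : Relation.ReflTransGen R ![-1,0] ![-A,-1] :=
        .single ⟨m2, m6, edge26 hA h⟩
      exact ⟨s15.trans (s52.trans s24), s45.trans (s52.trans (s26.trans s61))⟩
    · -- A = B ≥ 2, use 3→4 and 4→3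
      have h2 : 2 ≤ A := le_trans hB h
      have s34 : Relation.ReflTransGen R ![A-1,1] ![-A+1,-1] :=
        .single ⟨m3, m4, edge34 hAB h2⟩
      have s43 : Relation.ReflTransGen R ![-A+1,-1] ![A-1,1] :=
        .single ⟨m4, m3, edge43 hAB h2⟩
      exact ⟨s13.trans s34, s43.trans (s36.trans s61)⟩
  obtain ⟨c14, c41⟩ := cross
  -- reachability to and from ![1,0]
  have key : ∀ t ∈ nbrSet A,
      Relation.ReflTransGen R ![1,0] t ∧ Relation.ReflTransGen R t ![1,0] := by
    intro t ht
    have h1to4 := c14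
    have h4to1 := c41
    simp only [nbrSet, Set.mem_insert_iff, Set.mem_singleton_iff] at ht
    rcases ht with rfl | rfl | rfl | rfl | rfl | rfl
    · exact ⟨.refl, .refl⟩
    · exact ⟨c14.trans s45 |>.trans s52, s24.trans c41⟩
    · exact ⟨s13, s36.trans s61⟩
    · exact ⟨c14, c41⟩
    · exact ⟨c14.trans s45, s52.trans (s24.trans c41)⟩
    · exact ⟨s13.trans s36, s61⟩
  intro s hs s' hs'
  exact (key s hs).2.trans (key s' hs').1
end

section
/- Let A, B ∈ ℤ with 0 < A ≤ B and B ≥ 2, let M = [[0, −B], [1, −A]] acting on ℝ², and let T be the tile for M and digits {0, …, B−1}·e₁. Then T is centrally symmetric with respect to the digit-flip a ↦ B−1−a: T = t − T, where t = Σ_{n≥1} M^{−n}·((B−1)·e₁); that is, x ∈ T if and only if t − x ∈ T. Consequently the boundary satisfies ∂T = t − ∂T. -/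
/-!
Both `T` and `t - T` are nonempty compact attractors of the self-affine system
`x ↦ M⁻¹ (x + d)`, `d ∈ D = {0, …, B - 1} • e₁`: the flip `d ↦ (B - 1) • e₁ - d` permutes `D`,
and `t` is the fixed point of `x ↦ M⁻¹ (x + (B - 1) • e₁)`. The roots of `x² + A x + B` lie
outside the closed unit disc, so by Gelfand's formula `‖M⁻ⁿ‖` is summable. Pulling a point of one
attractor back `n` steps and pushing a point of the other forward along the same digits shows the
two attractors are within `‖M⁻ⁿ‖ · C` of each other for every `n`, hence equal.
-/

noncomputable section

/-- The symmetry point `t = Σ_{n≥1} M^{-n}·((B-1)e₁)` of the tile. -/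
def symPt (A B : ℤ) : Fin 2 → ℝ :=
  ∑' n : ℕ, ((M' A B)⁻¹ ^ (n + 1)).mulVec (((B : ℝ) - 1) • e1)

open Filter Topology Bornology
open scoped ComplexConjugate

section SelfAffine

variable {E : Type*} [NormedAddCommGroup E] [NormedSpace ℝ E]

def hutchinsonOp (N : E →L[ℝ] E) (D S : Set E) : Set E :=
  ⋃ d ∈ D, (fun x => N (x + d)) '' S

variable {N : E →L[ℝ] E} {D S T : Set E}

lemma mem_hutchinsonOp {x : E} :
    x ∈ hutchinsonOp N D S ↔ ∃ d ∈ D, ∃ y ∈ S, N (y + d) = x := by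
  simp [hutchinsonOp]

lemma eq_hutchinsonOp_of_image_eq {M : E → E} (hNM : ∀ x, N (M x) = x)
    (hT : M '' T = ⋃ d ∈ D, (· + d) '' T) : T = hutchinsonOp N D T := by
  ext x
  rw [mem_hutchinsonOp]
  constructor
  · intro hx
    obtain ⟨d, hd, y, hy, hyx⟩ := Set.mem_iUnion₂.1 (hT ▸ Set.mem_image_of_mem M hx)
    exact ⟨d, hd, y, hy, (congrArg N hyx).trans (hNM x)⟩
  · rintro ⟨d, hd, y, hy, rfl⟩
    obtain ⟨z, hz, hzy⟩ : y + d ∈ M '' T := hT ▸ Set.mem_biUnion hd ⟨y, hy, rfl⟩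
    rwa [← hzy, hNM]

lemma exists_sub_eq_pow_apply_sub (hT : T ⊆ hutchinsonOp N D T) (hS : hutchinsonOp N D S ⊆ S)
    (hSne : S.Nonempty) (n : ℕ) {x : E} (hx : x ∈ T) :
    ∃ p ∈ S, ∃ y ∈ T, ∃ z ∈ S, x - p = (N ^ n) (y - z) := by
  induction n generalizing x with
  | zero =>
    obtain ⟨z, hz⟩ := hSne
    exact ⟨z, hz, x, hx, z, hz, rfl⟩
  | succ n ih =>
    obtain ⟨d, hd, x', hx', rfl⟩ := mem_hutchinsonOp.1 (hT hx)
    obtain ⟨p, hp, y, hy, z, hz, h⟩ := ih hx'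
    refine ⟨N (p + d), hS (mem_hutchinsonOp.2 ⟨d, hd, p, hp, rfl⟩), y, hy, z, hz, ?_⟩
    rw [← map_sub, add_sub_add_right_eq_sub, h, pow_succ', mul_apply_eq_comp]

lemma subset_of_subset_hutchinsonOp (hN : Tendsto (fun n => ‖N ^ n‖) atTop (𝓝 0))
    (hTb : IsBounded T) (hSc : IsClosed S) (hSb : IsBounded S) (hSne : S.Nonempty)
    (hT : T ⊆ hutchinsonOp N D T) (hS : hutchinsonOp N D S ⊆ S) : T ⊆ S := by
  obtain ⟨C, hC⟩ := (hTb.sub hSb).exists_norm_le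
  intro x hx
  rw [← hSc.closure_eq, Metric.mem_closure_iff]
  intro ε hε
  obtain ⟨n, hn⟩ := ((hN.mul_const C).eventually_lt_const (by simpa using hε)).exists
  obtain ⟨p, hp, y, hy, z, hz, h⟩ := exists_sub_eq_pow_apply_sub hT hS hSne n hx
  refine ⟨p, hp, ?_⟩
  calc dist x p = ‖(N ^ n) (y - z)‖ := by rw [dist_eq_norm, h]
    _ ≤ ‖N ^ n‖ * C := (N ^ n).le_opNorm_of_le (hC _ (Set.sub_mem_sub hy hz))
    _ < ε := hn

lemma eq_of_eq_hutchinsonOp (hN : Tendsto (fun n => ‖N ^ n‖) atTop (𝓝 0))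
    (hT : IsCompact T) (hS : IsCompact S) (hTne : T.Nonempty) (hSne : S.Nonempty)
    (hTH : T = hutchinsonOp N D T) (hSH : S = hutchinsonOp N D S) : T = S :=
  (subset_of_subset_hutchinsonOp hN hT.isBounded hS.isClosed hS.isBounded hSne hTH.subset
    hSH.symm.subset).antisymm
  (subset_of_subset_hutchinsonOp hN hS.isBounded hT.isClosed hT.isBounded hTne hSH.subset
    hTH.symm.subset)

lemma hutchinsonOp_image_sub {t c : E} (ht : N (t + c) = t) (hD : ∀ d ∈ D, c - d ∈ D) :
    hutchinsonOp N D ((t - ·) '' S) = (t - ·) '' hutchinsonOp N D S := by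
  have key : ∀ x d, t - N (x + d) = N (t - x + (c - d)) := fun x d => by
    conv_lhs => rw [← ht]
    rw [← map_sub]
    congr 1
    abel
  ext y
  simp only [mem_hutchinsonOp, Set.mem_image]
  constructor
  · rintro ⟨d, hd, _, ⟨x, hx, rfl⟩, rfl⟩
    exact ⟨N (x + (c - d)), ⟨c - d, hD d hd, x, hx, rfl⟩, by rw [key, sub_sub_cancel]⟩
  · rintro ⟨_, ⟨d, hd, x, hx, rfl⟩, rfl⟩
    exact ⟨c - d, hD d hd, t - x, ⟨x, hx, rfl⟩, (key x d).symm⟩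

lemma apply_tsum_pow_succ_add {c : E} (hc : Summable fun n => (N ^ n) c) :
    N ((∑' n, (N ^ (n + 1)) c) + c) = ∑' n, (N ^ (n + 1)) c := by
  have hc1 : Summable fun n => (N ^ (n + 1)) c := (summable_nat_add_iff 1).2 hc
  rw [map_add, N.map_tsum hc1, hc1.tsum_eq_zero_add, add_comm]
  simp only [pow_succ' N, mul_apply_eq_comp, pow_zero, one_apply_eq_self]

end SelfAffine

lemma summable_norm_pow_of_spectralRadius_lt_one {𝔸 : Type*} [NormedRing 𝔸] [NormedAlgebra ℂ 𝔸]
    [CompleteSpace 𝔸] {a : 𝔸} (h : spectralRadius ℂ a < 1) : Summable fun n => ‖a ^ n‖ := by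
  obtain ⟨r, hρr, hr1⟩ := ENNReal.lt_iff_exists_nnreal_btwn.1 h
  refine .of_norm_bounded_eventually_nat
    (summable_geometric_of_lt_one r.2 (by exact_mod_cast hr1)) ?_
  have hgelfand := spectrum.pow_nnnorm_pow_one_div_tendsto_nhds_spectralRadius a
  filter_upwards [hgelfand.eventually_lt_const hρr, eventually_gt_atTop 0] with n hn hn0
  rw [one_div, ENNReal.rpow_inv_lt_iff (by positivity), ENNReal.rpow_natCast] at hn
  rw [norm_norm]
  exact_mod_cast hn.le

lemma one_lt_norm_of_sq_add_mul_add_eq_zero {a b : ℝ} (ha : 0 ≤ a) (hab : a ≤ b) (hb : 1 < b)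
    {z : ℂ} (hz : z ^ 2 + a * z + b = 0) : 1 < ‖z‖ := by
  by_cases hreal : conj z = z
  · obtain ⟨x, rfl⟩ := Complex.conj_eq_iff_real.1 hreal
    have hx : x ^ 2 + a * x + b = 0 := by exact_mod_cast hz
    rw [Complex.norm_real, Real.norm_eq_abs, lt_abs]
    by_contra! h
    nlinarith
  · -- `conj z` is the other root, so Vieta gives `z * conj z = b`
    have hconj : conj z ^ 2 + a * conj z + b = 0 := by simpa using congrArg conj hz
    have hsum : z + conj z + a = 0 :=
      (mul_eq_zero.1 (by linear_combination hz - hconj : (z - conj z) * (z + conj z + a) = 0))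
        |>.resolve_left (sub_ne_zero.2 (Ne.symm hreal))
    have hnormSq : (Complex.normSq z : ℂ) = b := by
      rw [← Complex.mul_conj]
      linear_combination z * hsum - hz
    have : ‖z‖ ^ 2 = b := by
      rw [Complex.sq_norm]
      exact_mod_cast hnormSq
    nlinarith [norm_nonneg z]

section LinftyNorm

attribute [local instance] Matrix.linftyOpNormedAddCommGroup Matrix.linftyOpNormedRing
  Matrix.linftyOpNormedAlgebra

section

variable {n : Type*} [Fintype n]

def mulVecCLM (N : Matrix n n ℝ) : (n → ℝ) →L[ℝ] (n → ℝ) :=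
  LinearMap.toContinuousLinearMap N.mulVecLin

@[simp] lemma mulVecCLM_apply (N : Matrix n n ℝ) (v : n → ℝ) : mulVecCLM N v = N.mulVec v := rfl

lemma mulVecCLM_pow [DecidableEq n] (N : Matrix n n ℝ) (k : ℕ) :
    mulVecCLM N ^ k = mulVecCLM (N ^ k) := by
  induction k with
  | zero => ext v; simp
  | succ k ih => ext v; simp [pow_succ, mul_apply_eq_comp, ih, ← Matrix.mulVec_mulVec]

lemma norm_mulVecCLM (N : Matrix n n ℝ) : ‖mulVecCLM N‖ = ‖N‖ :=
  (Matrix.linfty_opNorm_eq_opNorm N).symm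

lemma Matrix.linfty_opNorm_mapMatrix_ofRealHom [DecidableEq n] (N : Matrix n n ℝ) :
    ‖Complex.ofRealHom.mapMatrix N‖ = ‖N‖ := by
  simp [Matrix.linfty_opNorm_def]

lemma summable_norm_pow_mulVecCLM [DecidableEq n] {N : Matrix n n ℝ}
    (h : spectralRadius ℂ (Complex.ofRealHom.mapMatrix N) < 1) :
    Summable fun k => ‖mulVecCLM N ^ k‖ := by
  have : CompleteSpace (Matrix n n ℂ) := FiniteDimensional.complete ℂ _
  refine (summable_norm_pow_of_spectralRadius_lt_one h).congr fun k => ?_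
  rw [← map_pow, Matrix.linfty_opNorm_mapMatrix_ofRealHom, mulVecCLM_pow, norm_mulVecCLM]

end

variable {A B : ℤ}

lemma isUnit_det_M' (hB : B ≠ 0) : IsUnit (M' A B).det := by
  simpa [M', Matrix.det_fin_two_of] using hB

lemma one_lt_norm_of_mem_spectrum_M' (hA : 0 ≤ A) (hAB : A ≤ B) (hB : 1 < B) {μ : ℂ}
    (hμ : μ ∈ spectrum ℂ (Complex.ofRealHom.mapMatrix (M' A B))) : 1 < ‖μ‖ := by
  rw [Matrix.mem_spectrum_iff_isRoot_charpoly, Matrix.charpoly_fin_two] at hμ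
  refine one_lt_norm_of_sq_add_mul_add_eq_zero (a := A) (b := B) (by exact_mod_cast hA)
    (by exact_mod_cast hAB) (by exact_mod_cast hB) ?_
  simpa [M', Matrix.trace_fin_two, Matrix.det_fin_two] using hμ

lemma spectralRadius_inv_M'_lt_one (hA : 0 ≤ A) (hAB : A ≤ B) (hB : 1 < B) :
    spectralRadius ℂ (Complex.ofRealHom.mapMatrix (M' A B)⁻¹) < 1 := by
  have hdet := isUnit_det_M' (A := A) (by omega : B ≠ 0)
  let u : (Matrix (Fin 2) (Fin 2) ℂ)ˣ :=
    ⟨Complex.ofRealHom.mapMatrix (M' A B), Complex.ofRealHom.mapMatrix (M' A B)⁻¹,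
      by rw [← map_mul, Matrix.mul_nonsing_inv _ hdet, map_one],
      by rw [← map_mul, Matrix.nonsing_inv_mul _ hdet, map_one]⟩
  have : CompleteSpace (Matrix (Fin 2) (Fin 2) ℂ) := FiniteDimensional.complete ℂ _
  refine spectrum.spectralRadius_lt_of_forall_lt _ fun μ hμ => ?_
  have hμ0 : μ ≠ 0 := spectrum.ne_zero_of_mem_of_unit (a := u⁻¹) hμ
  have hμinv := (spectrum.inv_mem_iff (r := Units.mk0 μ hμ0) (a := u⁻¹)).1 hμ
  have := one_lt_norm_of_mem_spectrum_M' hA hAB hB hμinv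
  rw [Units.val_inv_eq_inv_val, Units.val_mk0, norm_inv, one_lt_inv_iff₀] at this
  exact_mod_cast this.2

end LinftyNorm

section Tile

variable {A B : ℤ}

def tileDigits (B : ℤ) : Set (Fin 2 → ℝ) := (fun j : ℤ => (j : ℝ) • e1) '' Set.Icc 0 (B - 1)

lemma sub_mem_tileDigits {d : Fin 2 → ℝ} (hd : d ∈ tileDigits B) :
    ((B : ℝ) - 1) • e1 - d ∈ tileDigits B := by
  obtain ⟨j, hj, rfl⟩ := hd
  refine ⟨B - 1 - j, ?_, ?_⟩
  · simp only [Set.mem_Icc] at hj ⊢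
    omega
  · push_cast
    module

lemma eq_hutchinsonOp_tileDigits (hB : B ≠ 0) {T : Set (Fin 2 → ℝ)}
    (hT : (M' A B).mulVec '' T =
      ⋃ j ∈ Set.Icc (0 : ℤ) (B - 1), (fun x => x + (j : ℝ) • e1) '' T) :
    T = hutchinsonOp (mulVecCLM (M' A B)⁻¹) (tileDigits B) T := by
  refine eq_hutchinsonOp_of_image_eq (fun x => ?_)
    (hT.trans (by rw [tileDigits, Set.biUnion_image]))
  rw [mulVecCLM_apply, Matrix.mulVec_mulVec, Matrix.nonsing_inv_mul _ (isUnit_det_M' hB),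
    Matrix.one_mulVec]

lemma mulVecCLM_inv_M'_symPt_add (hL : Summable fun n => ‖mulVecCLM (M' A B)⁻¹ ^ n‖) :
    mulVecCLM (M' A B)⁻¹ (symPt A B + ((B : ℝ) - 1) • e1) = symPt A B := by
  have hsymPt : symPt A B = ∑' n, (mulVecCLM (M' A B)⁻¹ ^ (n + 1)) (((B : ℝ) - 1) • e1) := by
    simp only [symPt, mulVecCLM_pow, mulVecCLM_apply]
  rw [hsymPt]
  exact apply_tsum_pow_succ_add
    (.of_norm_bounded (hL.mul_right _) fun n => (mulVecCLM (M' A B)⁻¹ ^ n).le_opNorm _)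

end Tile

/-- The tile `T` is centrally symmetric: `T = t - T`, i.e.
`x ∈ T ↔ t - x ∈ T`; consequently `∂T = t - ∂T`. -/
theorem tile_central_symmetry
    (A B : ℤ) (hA : 0 < A) (hAB : A ≤ B) (hB : 2 ≤ B)
    (T : Set (Fin 2 → ℝ)) (hTne : T.Nonempty) (hTcp : IsCompact T)
    (hT : (M' A B).mulVec '' T =
      ⋃ j ∈ Set.Icc (0 : ℤ) (B - 1), (fun x => x + (j : ℝ) • e1) '' T) :
    T = (fun x => symPt A B - x) '' T ∧
    (∀ x, x ∈ T ↔ symPt A B - x ∈ T) ∧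
    frontier T = (fun x => symPt A B - x) '' frontier T := by
  have hL := summable_norm_pow_mulVecCLM (spectralRadius_inv_M'_lt_one hA.le hAB hB)
  have hTH := eq_hutchinsonOp_tileDigits (by omega) hT
  have hsym : T = (symPt A B - ·) '' T := by
    refine eq_of_eq_hutchinsonOp hL.tendsto_atTop_zero hTcp
      (hTcp.image (continuous_const.sub continuous_id)) hTne (hTne.image _) hTH ?_
    rw [hutchinsonOp_image_sub (mulVecCLM_inv_M'_symPt_add hL) fun _ => sub_mem_tileDigits, ← hTH]
  have hpre : T = (symPt A B - ·) ⁻¹' T :=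
    hsym.trans (congrFun (Function.Involutive.image_eq_preimage_symm (sub_sub_cancel _)) T)
  refine ⟨hsym, fun x => Set.ext_iff.1 hpre x, ?_⟩
  conv_lhs => rw [hsym]
  exact ((Homeomorph.subLeft (symPt A B)).image_frontier T).symm
end
end

section
/- Let A, B ∈ ℤ with B ≥ 2. Then every complex root λ of the polynomial x² + A·x + B satisfies |λ| > 1 if and only if |A| ≤ B. (Equivalently: a 2×2 integer matrix with characteristic polynomial x² + A·x + B and determinant B ≥ 2 is expanding if and only if |A| ≤ B.) -/
/-!
For a non-real root `z` of `x² + a x + b` (with `a, b` real), the imaginary part of the equation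
forces `a = -2 Re z`, and then the real part reads `‖z‖² = b > 1`. So everything hinges on real roots in `[-1, 1]`. For `|t| ≤ 1` and `|a| < b + 1`,
`t² + a t + b > |t|² - (b + 1)|t| + b = (1 - |t|)(b - |t|) ≥ 0`, so there are none; conversely, if
`b + 1 ≤ |a|` the values at `±1` have opposite signs and the intermediate value theorem gives one.
Over the integers, `|A| < B + 1` is `|A| ≤ B`.
-/

open Complex

theorem normSq_eq_of_quadratic_root_of_im_ne_zero {a b : ℝ} {z : ℂ}
    (hz : z ^ 2 + a * z + b = 0) (him : z.im ≠ 0) : normSq z = b := by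
  have hre : z.re ^ 2 - z.im ^ 2 + a * z.re + b = 0 := by
    simpa [sq] using congrArg re hz
  have him' : z.im * (2 * z.re + a) = 0 := by
    have := congrArg im hz
    simp only [sq, add_im, mul_im, ofReal_re, ofReal_im, zero_im] at this
    linear_combination this
  have ha : a = -2 * z.re := by
    linarith [(mul_eq_zero.mp him').resolve_left him]
  rw [normSq_apply]
  subst ha
  linear_combination -hre

theorem quadratic_pos_of_abs_le_one {a b t : ℝ} (hb : 1 ≤ b) (ha : |a| < b + 1)
    (ht : |t| ≤ 1) : 0 < t ^ 2 + a * t + b := by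
  rcases eq_or_ne t 0 with rfl | ht0
  · simpa using zero_lt_one.trans_le hb
  have hat : -(|a| * |t|) ≤ a * t := by
    rw [← abs_mul]; exact neg_abs_le _
  have hlt : |a| * |t| < (b + 1) * |t| := mul_lt_mul_of_pos_right ha (abs_pos.mpr ht0)
  calc 0 ≤ (1 - |t|) * (b - |t|) := mul_nonneg (by linarith) (by linarith)
    _ = |t| ^ 2 - (b + 1) * |t| + b := by ring
    _ < t ^ 2 + a * t + b := by rw [sq_abs]; linarith

theorem exists_abs_le_one_quadratic_root {a b : ℝ} (hb : 0 ≤ b + 1) (h : b + 1 ≤ |a|) :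
    ∃ t : ℝ, |t| ≤ 1 ∧ t ^ 2 + a * t + b = 0 := by
  set p : ℝ → ℝ := fun t => t ^ 2 + a * t + b
  have hcont : ContinuousOn p (Set.uIcc (-1) 1) := by fun_prop
  have hmem : (0 : ℝ) ∈ Set.uIcc (p (-1)) (p 1) := by
    simp only [p, Set.mem_uIcc]
    rcases le_total 0 a with ha | ha
    · rw [abs_of_nonneg ha] at h
      left; constructor <;> linarith
    · rw [abs_of_nonpos ha] at h
      right; constructor <;> linarith
  obtain ⟨t, ht, hroot⟩ := intermediate_value_uIcc hcont hmem
  rw [Set.uIcc_of_le (by norm_num), Set.mem_Icc] at ht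
  exact ⟨t, abs_le.mpr ht, hroot⟩

theorem one_lt_norm_of_quadratic_root {a b : ℝ} (hb : 1 < b) (ha : |a| < b + 1) {z : ℂ}
    (hz : z ^ 2 + a * z + b = 0) : 1 < ‖z‖ := by
  by_cases him : z.im = 0
  · have hz_re : z = (z.re : ℂ) := (re_add_im z).symm.trans (by simp [him])
    have hroot : z.re ^ 2 + a * z.re + b = 0 := by
      rw [hz_re] at hz; exact_mod_cast hz
    rw [hz_re, norm_real, Real.norm_eq_abs]
    by_contra! hle
    exact (quadratic_pos_of_abs_le_one hb.le ha hle).ne' hroot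
  · rw [← one_lt_sq_iff₀ (norm_nonneg z), ← normSq_eq_norm_sq,
      normSq_eq_of_quadratic_root_of_im_ne_zero hz him]
    exact hb

theorem forall_one_lt_norm_of_quadratic_root_iff {a b : ℝ} (hb : 1 < b) :
    (∀ z : ℂ, z ^ 2 + a * z + b = 0 → 1 < ‖z‖) ↔ |a| < b + 1 := by
  refine ⟨fun h => ?_, fun ha z => one_lt_norm_of_quadratic_root hb ha⟩
  by_contra! ha
  obtain ⟨t, ht, hroot⟩ := exists_abs_le_one_quadratic_root (by linarith) ha
  have := h t (by exact_mod_cast hroot)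
  rw [norm_real, Real.norm_eq_abs] at this
  linarith

/-- For integers `A, B` with `B ≥ 2`, every complex root of
`x² + A·x + B` has modulus `> 1` if and only if `|A| ≤ B`. -/
theorem quadratic_expanding_iff
    (A B : ℤ) (hB : 2 ≤ B) :
    (∀ z : ℂ, z ^ 2 + (A : ℂ) * z + (B : ℂ) = 0 → 1 < ‖z‖) ↔
      |A| ≤ B := by
  have hb : (1 : ℝ) < B := by exact_mod_cast hB
  have := forall_one_lt_norm_of_quadratic_root_iff (a := A) hb
  push_cast at this
  rw [this, ← Int.lt_add_one_iff]
  exact_mod_cast Iff.rfl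
end
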